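/- The bilateral backward shift B on c_∞(ℤ) (the Banach space of two-sided complex sequences convergent as |n| → ∞, with the sup norm), defined by (Bf)ₙ = f_{n+1}, is not weakly supercyclic. -/

import Mathlib

/-!
The limit functional `lim : c_∞(ℤ) → ℂ` is invariant under the shift `B`, and `B` is a
contraction. If `lim f = 0`, the projective orbit `{c • Bⁿ f}` lies in the weakly closed
hyperplane `ker lim`. Otherwise `lim (c • Bⁿ f) = c • lim f` controls the scalar `c`, so for every
functional `ψ` the orbit lies in the weakly closed cone `‖ψ g‖ ≤ K ‖lim g‖`, which misses any
`g ∈ ker lim` with `ψ g ≠ 0`.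
-/

open Filter Topology

noncomputable def cInfZ : Submodule ℂ (BoundedContinuousFunction ℤ ℂ) where
  carrier := {f | ∃ L : ℂ, Tendsto (fun n : ℤ => f n) cofinite (nhds L)}
  zero_mem' := ⟨0, by simp⟩
  add_mem' := by
    rintro f g ⟨L, hL⟩ ⟨M, hM⟩
    exact ⟨L + M, by simpa using hL.add hM⟩
  smul_mem' := by
    rintro c f ⟨L, hL⟩
    exact ⟨c • L, by simpa [smul_eq_mul] using hL.const_mul c⟩

section WeakSupercyclic

variable {𝕜 E : Type*} [RCLike 𝕜] [NormedAddCommGroup E] [NormedSpace 𝕜 E]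

def IsWeaklySupercyclic (T : E →L[𝕜] E) : Prop :=
  ∃ f : E, Dense {g : WeakSpace 𝕜 E | ∃ (c : 𝕜) (n : ℕ), g = c • (T ^ n) f}

theorem not_isWeaklySupercyclic_of_invariant_functional {T : E →L[𝕜] E} {C : ℝ}
    (hT : ∀ n, ‖T ^ n‖ ≤ C) (φ : E →L[𝕜] 𝕜) (hφT : ∀ x, φ (T x) = φ x) (hφ : φ ≠ 0)
    (hker : LinearMap.ker (φ : E →ₗ[𝕜] 𝕜) ≠ ⊥) : ¬ IsWeaklySupercyclic T := by
  rintro ⟨f, hf⟩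
  have hφTn : ∀ n x, φ ((T ^ n) x) = φ x := by
    intro n
    induction n with
    | zero => simp
    | succ n ih =>
      intro x
      rw [pow_succ', ContinuousLinearMap.mul_def, ContinuousLinearMap.comp_apply, hφT, ih]
  have hcont (ψ : E →L[𝕜] 𝕜) : Continuous fun g : WeakSpace 𝕜 E => ψ g :=
    WeakBilin.eval_continuous _ ψ
  have forall_of_isClosed {p : E → Prop} (hp : IsClosed {g : WeakSpace 𝕜 E | p g})
      (horbit : ∀ (c : 𝕜) (n : ℕ), p (c • (T ^ n) f)) (x : E) : p x := by
    have hsub : {g : WeakSpace 𝕜 E | ∃ (c : 𝕜) (n : ℕ), g = c • (T ^ n) f} ⊆ {g | p g} := by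
      rintro _ ⟨c, n, rfl⟩
      exact horbit c n
    exact closure_minimal hsub hp (hf.closure_eq ▸ Set.mem_univ x)
  by_cases hφf : φ f = 0
  · exact hφ <| ContinuousLinearMap.ext <| forall_of_isClosed (p := fun g => φ g = 0)
      (isClosed_eq (hcont φ) continuous_const) fun c n => by rw [map_smul, hφTn, hφf, smul_zero]
  · obtain ⟨h, hh, hh0⟩ := Submodule.ne_bot_iff _ |>.mp hker
    obtain ⟨ψ, -, hψh⟩ := exists_dual_vector 𝕜 h (norm_ne_zero_iff.mpr hh0)
    set K := ‖ψ‖ * C * ‖f‖ / ‖φ f‖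
    have hK : K * ‖φ f‖ = ‖ψ‖ * C * ‖f‖ := div_mul_cancel₀ _ (norm_ne_zero_iff.mpr hφf)
    have horbit (c : 𝕜) (n : ℕ) : ‖ψ (c • (T ^ n) f)‖ ≤ K * ‖φ (c • (T ^ n) f)‖ := by
      simp only [map_smul, hφTn, smul_eq_mul, norm_mul]
      calc ‖c‖ * ‖ψ ((T ^ n) f)‖ ≤ ‖c‖ * (‖ψ‖ * (C * ‖f‖)) := by
            gcongr
            exact ψ.le_opNorm_of_le ((T ^ n).le_of_opNorm_le (hT n) f)
        _ = K * (‖c‖ * ‖φ f‖) := by rw [mul_left_comm K, hK]; ring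
    have hcone := forall_of_isClosed (p := fun g => ‖ψ g‖ ≤ K * ‖φ g‖)
      (isClosed_le (hcont ψ).norm (continuous_const.mul (hcont φ).norm)) horbit h
    have hφh : φ h = 0 := hh
    simp [hφh, hψh, hh0] at hcone

end WeakSupercyclic

namespace cInfZ

noncomputable def lim : ↥cInfZ →L[ℂ] ℂ :=
  LinearMap.mkContinuous
    { toFun := fun g => limUnder cofinite fun n => (g : BoundedContinuousFunction ℤ ℂ) n
      map_add' := fun g h => by
        obtain ⟨L, hL⟩ := g.2
        obtain ⟨M, hM⟩ := h.2
        simp only [Submodule.coe_add, BoundedContinuousFunction.coe_add, Pi.add_apply]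
        rw [hL.limUnder_eq, hM.limUnder_eq, (hL.add hM).limUnder_eq]
      map_smul' := fun c g => by
        obtain ⟨L, hL⟩ := g.2
        simp only [Submodule.coe_smul, BoundedContinuousFunction.coe_smul, smul_eq_mul,
          RingHom.id_apply]
        rw [hL.limUnder_eq, (hL.const_mul c).limUnder_eq] }
    1 fun g => by
      obtain ⟨L, hL⟩ := g.2
      simp only [LinearMap.coe_mk, AddHom.coe_mk, one_mul, hL.limUnder_eq]
      exact le_of_tendsto hL.norm (Eventually.of_forall fun n =>
        (g : BoundedContinuousFunction ℤ ℂ).norm_coe_le_norm n)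

theorem lim_eq {g : ↥cInfZ} {L : ℂ}
    (h : Tendsto (fun n => (g : BoundedContinuousFunction ℤ ℂ) n) cofinite (𝓝 L)) :
    lim g = L :=
  h.limUnder_eq

theorem tendsto_lim (g : ↥cInfZ) :
    Tendsto (fun n => (g : BoundedContinuousFunction ℤ ℂ) n) cofinite (𝓝 (lim g)) := by
  obtain ⟨L, hL⟩ := g.2
  rwa [lim_eq hL]

theorem lim_ne_zero : lim ≠ 0 := by
  intro h
  have hone : (1 : BoundedContinuousFunction ℤ ℂ) ∈ cInfZ := ⟨1, tendsto_const_nhds⟩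
  have hlim : lim ⟨1, hone⟩ = 1 := lim_eq tendsto_const_nhds
  exact one_ne_zero (hlim.symm.trans (DFunLike.congr_fun h _))

theorem ker_lim_ne_bot : LinearMap.ker (lim : ↥cInfZ →ₗ[ℂ] ℂ) ≠ ⊥ := by
  let δ : BoundedContinuousFunction ℤ ℂ :=
    .ofNormedAddCommGroupDiscrete (fun n => if n = 0 then 1 else 0) 1 fun n => by
      split_ifs <;> simp
  have hδ : Tendsto (fun n => δ n) cofinite (𝓝 0) :=
    tendsto_const_nhds.congr' <| (eventually_cofinite_ne 0).mono fun n hn => by simp [δ, hn]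
  refine (Submodule.ne_bot_iff _).mpr ⟨⟨δ, 0, hδ⟩, lim_eq hδ, fun h => ?_⟩
  simpa [δ] using congrArg (fun g : ↥cInfZ => (g : BoundedContinuousFunction ℤ ℂ) 0) h

def IsBackwardShift (B : ↥cInfZ →L[ℂ] ↥cInfZ) : Prop :=
  ∀ (f : ↥cInfZ) (n : ℤ), (B f : BoundedContinuousFunction ℤ ℂ) n
    = (f : BoundedContinuousFunction ℤ ℂ) (n + 1)

variable {B : ↥cInfZ →L[ℂ] ↥cInfZ}

theorem IsBackwardShift.pow_apply (hB : IsBackwardShift B) (n : ℕ) (g : ↥cInfZ) (k : ℤ) :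
    ((B ^ n) g : BoundedContinuousFunction ℤ ℂ) k =
      (g : BoundedContinuousFunction ℤ ℂ) (k + n) := by
  induction n generalizing k with
  | zero => simp
  | succ n ih =>
    rw [pow_succ', ContinuousLinearMap.mul_def, ContinuousLinearMap.comp_apply, hB, ih]
    push_cast
    ring_nf

theorem IsBackwardShift.norm_pow_le (hB : IsBackwardShift B) (n : ℕ) : ‖B ^ n‖ ≤ 1 :=
  ContinuousLinearMap.opNorm_le_bound _ zero_le_one fun g => by
    rw [one_mul, Submodule.coe_norm, Submodule.coe_norm,
      BoundedContinuousFunction.norm_le (norm_nonneg _)]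
    intro k
    rw [hB.pow_apply]
    exact (g : BoundedContinuousFunction ℤ ℂ).norm_coe_le_norm _

theorem IsBackwardShift.lim_apply (hB : IsBackwardShift B) (g : ↥cInfZ) : lim (B g) = lim g :=
  lim_eq <| ((tendsto_lim g).comp (add_left_injective 1).tendsto_cofinite).congr fun n =>
    (hB g n).symm

end cInfZ

/-- the bilateral backward shift `(Bf)ₙ = f_{n+1}` on `c_∞(ℤ)` is not
weakly supercyclic. -/
theorem bilateral_shift_on_cInfZ_not_weakly_supercyclic
    (B : ↥cInfZ →L[ℂ] ↥cInfZ)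
    (hB : ∀ (f : ↥cInfZ) (n : ℤ), ((B f : BoundedContinuousFunction ℤ ℂ)) n
          = (f : BoundedContinuousFunction ℤ ℂ) (n + 1)) :
    ¬ ∃ f : ↥cInfZ, Dense {g : WeakSpace ℂ ↥cInfZ | ∃ (c : ℂ) (n : ℕ), g = c • (B ^ n) f} :=
  not_isWeaklySupercyclic_of_invariant_functional (cInfZ.IsBackwardShift.norm_pow_le hB)
    cInfZ.lim (cInfZ.IsBackwardShift.lim_apply hB) cInfZ.lim_ne_zero cInfZ.ker_lim_ne_bot
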